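/- arXiv:1209.4586 — 4 statements merged into one kernel-verified Lean document; each statement's English description precedes it below -/
import Mathlib

section
/- Let E be a real inner product space with dim E ≥ 2 and G an abelian group. If f : E → G satisfies f(x+y) = f(x) + f(y) for all x, y ∈ E with ⟨x,y⟩ = 0, then there exist additive maps a : ℝ → G and b : E → G such that f(x) = a(‖x‖²) + b(x) for all x ∈ E. -/
/-!
The even part `u ↦ f u + f (-u)` is again orthogonally additive and depends only on `‖u‖`, so by
Pythagoras (a second dimension supplies orthogonal vectors of every length) it is `A (‖u‖ ^ 2)`
for a map `A` additive on `[0, ∞)`, which extends to an additive map on `ℝ`. On a line, a vector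
`v ⊥ x` with `‖v‖ = ‖x‖` gives `f ((s + t) • x) = f (s • x) + f (t • x) + A (s t ‖x‖ ^ 2)` when
`s t ≥ 0`, and the even-part identity removes the sign condition. Writing `y = α • x + z` with
`z ⊥ x` then gives `f (x + y) = f x + f y + A ⟪x, y⟫`, so `x ↦ f x - A (‖x‖ ^ 2 / 2)` is additive.
-/

open scoped RealInnerProductSpace

theorem exists_addMonoidHom_eq_of_map_add_of_nonneg {α G : Type*} [AddCommGroup α] [LinearOrder α]
    [IsOrderedAddMonoid α] [AddCommGroup G] {φ : α → G}
    (hφ : ∀ s t, 0 ≤ s → 0 ≤ t → φ (s + t) = φ s + φ t) :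
    ∃ A : α →+ G, ∀ s, 0 ≤ s → A s = φ s := by
  have hφ0 : φ 0 = 0 := by simpa using hφ 0 0 le_rfl le_rfl
  refine ⟨AddMonoidHom.mk' (fun s => φ s⁺ - φ s⁻) fun s t => ?_, fun s hs => ?_⟩
  · have key : (s + t)⁺ + (s⁻ + t⁻) = (s⁺ + t⁺) + (s + t)⁻ := by
      rw [← sub_eq_sub_iff_add_eq_add, ← sub_add_sub_comm]
      simp only [posPart_sub_negPart]
    have := congrArg φ key
    rw [hφ _ _ (posPart_nonneg _) (add_nonneg (negPart_nonneg _) (negPart_nonneg _)),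
      hφ _ _ (add_nonneg (posPart_nonneg _) (posPart_nonneg _)) (negPart_nonneg _),
      hφ _ _ (negPart_nonneg _) (negPart_nonneg _),
      hφ _ _ (posPart_nonneg _) (posPart_nonneg _)] at this
    simpa only [AddMonoidHom.mk'_apply, sub_add_sub_comm, sub_eq_sub_iff_add_eq_add]
  · simp [posPart_eq_self.2 hs, negPart_eq_zero.2 hs, hφ0]

theorem map_add_eq_of_forall_mul_nonneg {G : Type*} [AddCommGroup G] {h : ℝ → G} {A : ℝ →+ G}
    (hneg : ∀ s, h s + h (-s) = A (s * s))
    (hnonneg : ∀ s t, 0 ≤ s * t → h (s + t) = h s + h t + A (s * t)) (s t : ℝ) :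
    h (s + t) = h s + h t + A (s * t) := by
  -- if `(s + t) * -t ≥ 0`, split `s = (s + t) + -t` instead
  have key : ∀ s t, 0 ≤ (s + t) * -t → h (s + t) = h s + h t + A (s * t) := by
    intro s t hst
    have hs := hnonneg (s + t) (-t) hst
    rw [add_neg_cancel_right] at hs
    have hA : A ((s + t) * -t) = -A (s * t) - A (t * t) := by
      rw [show (s + t) * -t = -(s * t) + -(t * t) by ring, map_add, map_neg, map_neg,
        sub_eq_add_neg]
    rw [hs, hA, ← hneg t]
    abel
  rcases le_total 0 (s * t) with hst | hst
  · exact hnonneg s t hst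
  rcases le_or_gt 0 ((s + t) * -t) with hst' | hst'
  · exact key s t hst'
  · -- `((s + t) * -t) * ((t + s) * -s) = (s + t) ^ 2 * (s * t) ≤ 0`
    have hts : 0 ≤ (t + s) * -s := by
      nlinarith [mul_nonpos_of_nonneg_of_nonpos (sq_nonneg (s + t)) hst]
    rw [add_comm s t, key t s hts, mul_comm t s]
    abel

section

variable {E G : Type*} [NormedAddCommGroup E] [InnerProductSpace ℝ E] [AddCommGroup G]

theorem exists_ne_zero_inner_eq_zero (hdim : 2 ≤ Module.rank ℝ E) (x : E) :
    ∃ z : E, z ≠ 0 ∧ ⟪x, z⟫ = 0 := by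
  have hspan : (ℝ ∙ x) ≠ ⊤ := by
    intro htop
    have := (rank_span_le (R := ℝ) {x}).trans_eq (Cardinal.mk_singleton x)
    rw [htop, rank_top] at this
    exact absurd (hdim.trans this) (by norm_num)
  obtain ⟨z, hz, hz0⟩ := (Submodule.ne_bot_iff _).1 (mt Submodule.orthogonal_eq_bot_iff.1 hspan)
  exact ⟨z, hz0, Submodule.mem_orthogonal_singleton_iff_inner_right.1 hz⟩

theorem exists_inner_eq_zero_norm_eq (hdim : 2 ≤ Module.rank ℝ E) (x : E) {r : ℝ} (hr : 0 ≤ r) :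
    ∃ v : E, ⟪x, v⟫ = 0 ∧ ‖v‖ = r := by
  obtain ⟨z, hz0, hxz⟩ := exists_ne_zero_inner_eq_zero hdim x
  refine ⟨(r / ‖z‖) • z, by rw [real_inner_smul_right, hxz, mul_zero], ?_⟩
  rw [norm_smul, Real.norm_of_nonneg (by positivity), div_mul_cancel₀ _ (norm_ne_zero_iff.2 hz0)]

def OrthogonallyAdditive (f : E → G) : Prop :=
  ∀ x y : E, ⟪x, y⟫ = 0 → f (x + y) = f x + f y

namespace OrthogonallyAdditive

variable {f : E → G}

theorem map_zero (hf : OrthogonallyAdditive f) : f 0 = 0 := by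
  simpa using hf 0 0 (inner_zero_left _)

theorem add_neg (hf : OrthogonallyAdditive f) : OrthogonallyAdditive fun u => f u + f (-u) := by
  intro x y hxy
  dsimp only
  rw [neg_add, hf x y hxy, hf (-x) (-y) (by rwa [inner_neg_neg])]
  abel

/-- The even part `f u + f (-u)` depends only on `‖u‖`: for `‖u‖ = ‖v‖` the vectors
`(u + v) / 2` and `(u - v) / 2` are orthogonal. -/
theorem add_neg_eq_of_norm_eq (hf : OrthogonallyAdditive f) {u v : E} (huv : ‖u‖ = ‖v‖) :
    f u + f (-u) = f v + f (-v) := by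
  set p : E := (2⁻¹ : ℝ) • (u + v)
  set q : E := (2⁻¹ : ℝ) • (u - v)
  have hpq : ⟪p, q⟫ = 0 := by
    simp only [p, q, real_inner_smul_left, real_inner_smul_right, inner_add_left, inner_sub_right,
      real_inner_self_eq_norm_sq, real_inner_comm u v, huv]
    ring
  have hu : u = p + q := by simp only [p, q]; module
  have hv : v = p + -q := by simp only [p, q]; module
  have h₁ := hf.add_neg p q hpq
  have h₂ := hf.add_neg p (-q) (by rw [inner_neg_right, hpq, neg_zero])
  beta_reduce at h₁ h₂
  rw [← hu] at h₁
  rw [← hv, neg_neg] at h₂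
  rw [h₁, h₂]
  abel

theorem exists_addMonoidHom_add_neg (hdim : 2 ≤ Module.rank ℝ E) (hf : OrthogonallyAdditive f) :
    ∃ A : ℝ →+ G, ∀ u : E, f u + f (-u) = A (‖u‖ ^ 2) := by
  obtain ⟨e, -, he⟩ := exists_inner_eq_zero_norm_eq hdim (0 : E) zero_le_one
  set φ : ℝ → G := fun s => f (√s • e) + f (-(√s • e))
  have hφ : ∀ u : E, f u + f (-u) = φ (‖u‖ ^ 2) := fun u =>
    hf.add_neg_eq_of_norm_eq (by simp [norm_smul, he])
  obtain ⟨A, hA⟩ := exists_addMonoidHom_eq_of_map_add_of_nonneg (φ := φ) fun s t hs ht => by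
    obtain ⟨v, hv, hvt⟩ := exists_inner_eq_zero_norm_eq hdim (√s • e) (Real.sqrt_nonneg t)
    replace hvt : ‖v‖ ^ 2 = t := by rw [hvt, Real.sq_sqrt ht]
    have hsum : ‖√s • e + v‖ ^ 2 = s + t := by
      rw [norm_add_sq_real, hv, hvt, norm_smul, he, Real.norm_of_nonneg (Real.sqrt_nonneg s),
        mul_one, Real.sq_sqrt hs]
      ring
    rw [← hsum, ← hφ, ← hvt, ← hφ]
    exact hf.add_neg _ _ hv
  exact ⟨A, fun u => (hφ u).trans (hA _ (sq_nonneg _)).symm⟩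

/-- With `v ⊥ x`, `‖v‖ = ‖x‖` and `c = √(s t)`, the vectors `s • x + c • v` and `t • x - c • v`
are orthogonal and sum to `(s + t) • x`. -/
theorem map_add_smul_of_mul_nonneg (hdim : 2 ≤ Module.rank ℝ E) (hf : OrthogonallyAdditive f)
    {A : ℝ →+ G} (hA : ∀ u : E, f u + f (-u) = A (‖u‖ ^ 2)) (x : E) {s t : ℝ} (hst : 0 ≤ s * t) :
    f ((s + t) • x) = f (s • x) + f (t • x) + A (s * t * ‖x‖ ^ 2) := by
  obtain ⟨v, hxv, hv⟩ := exists_inner_eq_zero_norm_eq hdim x (norm_nonneg x)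
  set c := √(s * t)
  have hc : c ^ 2 = s * t := Real.sq_sqrt hst
  have hcv : ‖c • v‖ ^ 2 = s * t * ‖x‖ ^ 2 := by
    rw [norm_smul, mul_pow, Real.norm_eq_abs, sq_abs, hc, hv]
  have hperp : ∀ a b : ℝ, ⟪a • x, b • v⟫ = 0 := fun a b => by
    rw [real_inner_smul_left, real_inner_smul_right, hxv, mul_zero, mul_zero]
  have hsplit : ⟪s • x + c • v, t • x + -(c • v)⟫ = 0 := by
    simp only [inner_add_left, inner_add_right, inner_neg_right, real_inner_smul_left,
      real_inner_smul_right, real_inner_self_eq_norm_sq, hxv, real_inner_comm x v]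
    linear_combination -hcv
  have hsum : s • x + c • v + (t • x + -(c • v)) = (s + t) • x := by module
  rw [← hsum, hf _ _ hsplit, hf _ _ (hperp s c), ← neg_smul, hf _ _ (hperp t (-c)), neg_smul,
    ← hcv, ← hA]
  abel

theorem map_add_smul (hdim : 2 ≤ Module.rank ℝ E) (hf : OrthogonallyAdditive f)
    {A : ℝ →+ G} (hA : ∀ u : E, f u + f (-u) = A (‖u‖ ^ 2)) (x : E) (s t : ℝ) :
    f ((s + t) • x) = f (s • x) + f (t • x) + A (s * t * ‖x‖ ^ 2) :=
  map_add_eq_of_forall_mul_nonneg (h := fun s => f (s • x))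
    (A := A.comp (AddMonoidHom.mulRight (‖x‖ ^ 2)))
    (fun s => by
      change f (s • x) + f ((-s) • x) = A (s * s * ‖x‖ ^ 2)
      rw [neg_smul, hA, norm_smul, mul_pow, Real.norm_eq_abs, sq_abs, sq])
    (fun _ _ => hf.map_add_smul_of_mul_nonneg hdim hA x) s t

theorem map_add_eq_add_add_inner (hdim : 2 ≤ Module.rank ℝ E) (hf : OrthogonallyAdditive f)
    {A : ℝ →+ G} (hA : ∀ u : E, f u + f (-u) = A (‖u‖ ^ 2)) (x y : E) :
    f (x + y) = f x + f y + A ⟪x, y⟫ := by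
  rcases eq_or_ne x 0 with rfl | hx
  · simp [hf.map_zero]
  set α := ⟪x, y⟫ / ‖x‖ ^ 2
  set z := y - α • x
  have hxz : ∀ c : ℝ, ⟪c • x, z⟫ = 0 := fun c => by
    rw [real_inner_smul_left, inner_sub_right, real_inner_smul_right, real_inner_self_eq_norm_sq,
      div_mul_cancel₀ _ (by positivity), sub_self, mul_zero]
  have hy : y = α • x + z := by simp only [z]; abel
  have hxy : x + y = (1 + α) • x + z := by rw [hy, add_smul, one_smul, add_assoc]
  have hαx : 1 * α * ‖x‖ ^ 2 = ⟪x, y⟫ := by rw [one_mul, div_mul_cancel₀ _ (by positivity)]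
  rw [hxy, hf _ _ (hxz _), hf.map_add_smul hdim hA, one_smul, hαx, hy, hf _ _ (hxz _)]
  abel

end OrthogonallyAdditive

end

theorem orthogonally_additive_form {E : Type*} [NormedAddCommGroup E]
    [InnerProductSpace ℝ E] (hdim : 2 ≤ Module.rank ℝ E)
    {G : Type*} [AddCommGroup G] (f : E → G)
    (hf : ∀ x y : E, ⟪x, y⟫ = 0 → f (x + y) = f x + f y) :
    ∃ (a : ℝ → G) (b : E → G),
      (∀ s t : ℝ, a (s + t) = a s + a t) ∧
      (∀ x y : E, b (x + y) = b x + b y) ∧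
      ∀ x : E, f x = a (‖x‖ ^ 2) + b x := by
  have hf : OrthogonallyAdditive f := hf
  obtain ⟨A, hA⟩ := hf.exists_addMonoidHom_add_neg hdim
  refine ⟨fun s => A (s / 2), fun x => f x - A (‖x‖ ^ 2 / 2), fun s t => by simp [add_div],
    fun x y => ?_, fun x => (add_sub_cancel _ _).symm⟩
  have hnorm : ‖x + y‖ ^ 2 / 2 = ‖x‖ ^ 2 / 2 + ‖y‖ ^ 2 / 2 + ⟪x, y⟫ := by
    rw [norm_add_sq_real]; ring
  dsimp only
  rw [hf.map_add_eq_add_add_inner hdim hA, hnorm, map_add, map_add]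
  abel
end

section
/- Let A be a meager subset of the unit sphere S^{n−1} ⊂ ℝⁿ. Then there exists an orthonormal basis (x₁,…,xₙ) of ℝⁿ with xᵢ ∈ S^{n−1} \ A for every i. -/
/-!
The orthogonal group `G` of a finite-dimensional real inner product space is a compact group
acting continuously and transitively (by reflections) on the unit sphere. By the open mapping
theorem for such actions, each orbit map `g ↦ g • eᵢ` is continuous and open, so it pulls the
meagre set `A` back to a meagre subset of `G`. Finitely many meagre sets cannot cover the Baire
space `G`, and any `g` outside their union carries the standard basis to a basis avoiding `A`.
-/

open Metric MulAction

section OrbitMap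

variable {G X : Type*} [TopologicalSpace G] [Group G] [IsTopologicalGroup G] [SigmaCompactSpace G]
  [BaireSpace G] [TopologicalSpace X] [MulAction G X] [ContinuousSMul G X] [IsPretransitive G X]
  [BaireSpace X] [T2Space X]

theorem exists_forall_smul_notMem_of_isMeagre {ι : Type*} [Countable ι] (x : ι → X) {s : Set X}
    (hs : IsMeagre s) : ∃ g : G, ∀ i, g • x i ∉ s := by
  have hbad : IsMeagre (⋃ i, (· • x i) ⁻¹' s : Set G) := isMeagre_iUnion fun i ↦
    hs.preimage_of_isOpenMap (continuous_id.smul continuous_const)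
      (isOpenMap_smul_of_sigmaCompact (x i))
  obtain ⟨g, hg⟩ := (dense_of_mem_residual hbad).nonempty
  exact ⟨g, by simpa using hg⟩

end OrbitMap

namespace Unitary

section RCLike

variable {𝕜 E : Type*} [RCLike 𝕜] [NormedAddCommGroup E] [InnerProductSpace 𝕜 E]
  [CompleteSpace E] {r : ℝ}

instance : MulAction (unitary (E →L[𝕜] E)) (sphere (0 : E) r) where
  smul u x := ⟨(u : E →L[𝕜] E) x, by simp [norm_map]⟩
  one_smul _ := rfl
  mul_smul _ _ _ := rfl

instance : ContinuousSMul (unitary (E →L[𝕜] E)) (sphere (0 : E) r) where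
  continuous_smul := Continuous.subtype_mk
    ((continuous_subtype_val.comp continuous_fst).clm_apply
      (continuous_subtype_val.comp continuous_snd)) _

instance [FiniteDimensional 𝕜 E] : CompactSpace (unitary (E →L[𝕜] E)) := by
  have := FiniteDimensional.proper 𝕜 (E →L[𝕜] E)
  refine isCompact_iff_compactSpace.mp
    (isCompact_of_isClosed_isBounded isClosed_unitary ?_)
  refine (isBounded_closedBall (x := 0) (r := 1)).subset fun u hu ↦ ?_
  rw [mem_closedBall_zero_iff]
  exact ContinuousLinearMap.opNorm_le_bound _ zero_le_one fun x ↦ by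
    rw [norm_map ⟨u, hu⟩, one_mul]

end RCLike

variable {E : Type*} [NormedAddCommGroup E] [InnerProductSpace ℝ E] [CompleteSpace E] {r : ℝ}

instance : IsPretransitive (unitary (E →L[ℝ] E)) (sphere (0 : E) r) where
  exists_smul_eq x y := by
    refine ⟨linearIsometryEquiv.symm (Submodule.reflection (ℝ ∙ ((x : E) - y))ᗮ), ?_⟩
    ext
    exact Submodule.reflection_sub (by simp)

end Unitary

theorem OrthonormalBasis.exists_forall_notMem_of_isMeagre {ι E : Type*} [Fintype ι]
    [NormedAddCommGroup E] [InnerProductSpace ℝ E] [FiniteDimensional ℝ E]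
    (b₀ : OrthonormalBasis ι ℝ E) {A : Set E} (hA : IsMeagre ((↑) ⁻¹' A : Set (sphere (0 : E) 1))) :
    ∃ b : OrthonormalBasis ι ℝ E, ∀ i, b i ∉ A := by
  obtain ⟨u, hu⟩ := exists_forall_smul_notMem_of_isMeagre (G := unitary (E →L[ℝ] E))
    (fun i ↦ (⟨b₀ i, by simp [b₀.orthonormal.1 i]⟩ : sphere (0 : E) 1)) hA
  exact ⟨b₀.map (Unitary.linearIsometryEquiv u), hu⟩

theorem exists_orthonormalBasis_avoiding_meager_general (n : ℕ)
    (A : Set (EuclideanSpace ℝ (Fin n)))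
    (hmeager : IsMeagre
      (Subtype.val ⁻¹' A : Set (Metric.sphere (0 : EuclideanSpace ℝ (Fin n)) 1))) :
    ∃ b : OrthonormalBasis (Fin n) ℝ (EuclideanSpace ℝ (Fin n)),
      ∀ i, b i ∉ A :=
  (EuclideanSpace.basisFun (Fin n) ℝ).exists_forall_notMem_of_isMeagre hmeager

theorem exists_orthonormalBasis_avoiding_meager (n : ℕ) (hn : 2 ≤ n)
    (A : Set (EuclideanSpace ℝ (Fin n)))
    (hA : A ⊆ Metric.sphere (0 : EuclideanSpace ℝ (Fin n)) 1)
    (hmeager : IsMeagre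
      (Subtype.val ⁻¹' A : Set (Metric.sphere (0 : EuclideanSpace ℝ (Fin n)) 1))) :
    ∃ b : OrthonormalBasis (Fin n) ℝ (EuclideanSpace ℝ (Fin n)),
      ∀ i, b i ∉ A :=
  exists_orthonormalBasis_avoiding_meager_general n A hmeager
end

section
/- Fix n ≥ 2 and a unit vector x ∈ ℝⁿ with last coordinate nonzero. Let Pₓ = {y ∈ ℝⁿ : ⟨x,y⟩ = 0}. The map Φₓ(λ, y) = (λx + y, (‖y‖²/λ)x − y), defined on {(λ,y) ∈ ℝ* × Pₓ\{0} : λ² ≠ ‖y‖²}, is an injective map into ⊥* = {(t,u) ≠ (0,0) : ⟨t,u⟩ = 0}, and its inverse on the image is given by λ = ⟨t,x⟩ and y = t − ⟨t,x⟩x; hence Φₓ is a homeomorphism onto its image. -/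
open scoped RealInnerProductSpace

/-- For a unit vector `x` with nonzero last coordinate, the map
`Φₓ(λ, y) = (λx + y, (‖y‖²/λ)x − y)` on
`{(λ,y) : λ ≠ 0, y ∈ Pₓ \ {0}, λ² ≠ ‖y‖²}` maps into the set of nonzero
orthogonal pairs, is injective with explicit continuous inverse
`(t,u) ↦ (⟨t,x⟩, t − ⟨t,x⟩x)`, hence is a homeomorphism onto its image. -/
theorem phi_x_homeomorphism_onto_image (n : ℕ) (hn : 2 ≤ n)
    (x : EuclideanSpace ℝ (Fin n)) (hx : ‖x‖ = 1)
    (hxn : x ⟨n - 1, by omega⟩ ≠ 0) :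
    let D : Set (ℝ × EuclideanSpace ℝ (Fin n)) :=
      {p | p.1 ≠ 0 ∧ p.2 ≠ 0 ∧ ⟪x, p.2⟫ = 0 ∧ p.1 ^ 2 ≠ ‖p.2‖ ^ 2}
    let Φ : ℝ × EuclideanSpace ℝ (Fin n) →
        EuclideanSpace ℝ (Fin n) × EuclideanSpace ℝ (Fin n) :=
      fun p => (p.1 • x + p.2, (‖p.2‖ ^ 2 / p.1) • x - p.2)
    let Ψ : EuclideanSpace ℝ (Fin n) × EuclideanSpace ℝ (Fin n) →
        ℝ × EuclideanSpace ℝ (Fin n) :=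
      fun q => (⟪q.1, x⟫, q.1 - ⟪q.1, x⟫ • x)
    (∀ p ∈ D, Φ p ≠ 0 ∧ ⟪(Φ p).1, (Φ p).2⟫ = 0) ∧
    Set.InjOn Φ D ∧
    (∀ p ∈ D, Ψ (Φ p) = p) ∧
    ContinuousOn Φ D ∧ ContinuousOn Ψ (Φ '' D) := by
  intro D Φ Ψ
  have hxx : ⟪x, x⟫ = (1 : ℝ) := by
    rw [real_inner_self_eq_norm_sq, hx]; norm_num
  have hΨΦ : ∀ p ∈ D, Ψ (Φ p) = p := by
    rintro ⟨l, y⟩ ⟨hl, hy, hxy, -⟩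
    have hxy' : ⟪y, x⟫ = 0 := by rw [real_inner_comm]; exact hxy
    have h1 : ⟪l • x + y, x⟫ = l := by
      rw [inner_add_left, real_inner_smul_left, hxx, hxy']; ring
    simp only [Ψ, Φ, h1, Prod.mk.injEq]
    exact ⟨trivial, by simp⟩
  refine ⟨?_, ?_, hΨΦ, ?_, ?_⟩
  · rintro ⟨l, y⟩ ⟨hl, hy, hxy, -⟩
    have hxy' : ⟪y, x⟫ = 0 := by rw [real_inner_comm]; exact hxy
    have hxy2 : ⟪x, y⟫ = (0 : ℝ) := hxy
    constructor
    · intro h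
      have h1 : l • x + y = 0 := congrArg Prod.fst h
      have : ⟪l • x + y, x⟫ = 0 := by rw [h1, inner_zero_left]
      rw [inner_add_left, real_inner_smul_left, hxx, hxy'] at this
      simp at this
      exact hl this
    · simp only [Φ]
      rw [inner_sub_right, inner_add_left, inner_add_left,
        real_inner_smul_left, real_inner_smul_right, real_inner_smul_right,
        real_inner_smul_left,
        hxx, hxy2, hxy', real_inner_self_eq_norm_sq]
      field_simp
      ring
  · intro p hp q hq h
    rw [← hΨΦ p hp, ← hΨΦ q hq, h]
  · apply ContinuousOn.prodMk
    · exact (continuousOn_fst.smul continuousOn_const).add continuousOn_snd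
    · apply ContinuousOn.sub _ continuousOn_snd
      apply ContinuousOn.fun_smul _ continuousOn_const
      exact ContinuousOn.div (continuousOn_snd.norm.pow 2) continuousOn_fst
        fun p hp => hp.1
  · have hc : Continuous Ψ := by
      apply Continuous.prodMk
      · exact (continuous_fst.inner continuous_const)
      · exact continuous_fst.sub
          ((continuous_fst.inner continuous_const).fun_smul continuous_const)
    exact hc.continuousOn
end

section
/- (de Bruijn) Let G be an abelian group and φ : (0,∞) → G a function such that for almost every λ ∈ (0,∞) (Lebesgue), φ(λ+μ) = φ(λ) + φ(μ) holds for almost every μ ∈ (0,∞). Then there exists an additive function a : ℝ → G such that φ(λ) = a(λ) for almost every λ ∈ (0,∞). -/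
open MeasureTheory

private lemma ae_shift {p : ℝ → Prop} (c : ℝ) (h : ∀ᵐ x : ℝ, p x) :
    ∀ᵐ x : ℝ, p (c + x) :=
  ((measurePreserving_add_left (volume : Measure ℝ) c).quasiMeasurePreserving.tendsto_ae).eventually h

private lemma exists_gt_of_ae {p : ℝ → Prop} (b : ℝ) (h : ∀ᵐ x : ℝ, p x) :
    ∃ x, b < x ∧ p x := by
  have hne : ((volume : Measure ℝ).restrict (Set.Ioi b)) ≠ 0 := by
    rw [Ne, Measure.restrict_eq_zero, Real.volume_Ioi]
    simp
  haveI : ((ae ((volume : Measure ℝ).restrict (Set.Ioi b)))).NeBot := ae_neBot.2 hne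
  have h1 : ∀ᵐ x ∂((volume : Measure ℝ).restrict (Set.Ioi b)), p x := ae_restrict_of_ae h
  have h2 : ∀ᵐ x ∂((volume : Measure ℝ).restrict (Set.Ioi b)), x ∈ Set.Ioi b :=
    ae_restrict_mem measurableSet_Ioi
  obtain ⟨x, hx1, hx2⟩ := (h2.and h1).exists
  exact ⟨x, hx1, hx2⟩

/-- (de Bruijn) If `φ : (0,∞) → G` satisfies the Cauchy equation for almost all
pairs (in the conjugate-ideal sense), then `φ` agrees almost everywhere on
`(0,∞)` with a genuinely additive function `a : ℝ → G`. -/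
theorem deBruijn_almost_additive {G : Type*} [AddCommGroup G] (φ : ℝ → G)
    (hyp : ∀ᵐ l ∂(volume.restrict (Set.Ioi (0 : ℝ))),
      ∀ᵐ m ∂(volume.restrict (Set.Ioi (0 : ℝ))), φ (l + m) = φ l + φ m) :
    ∃ a : ℝ → G, (∀ s t : ℝ, a (s + t) = a s + a t) ∧
      ∀ᵐ l ∂(volume.restrict (Set.Ioi (0 : ℝ))), φ l = a l := by
  -- unfold the restrictions to plain volume with implications
  have h0 : ∀ᵐ l : ℝ, 0 < l → ∀ᵐ m : ℝ, 0 < m → φ (l + m) = φ l + φ m := by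
    have := (ae_restrict_iff' (μ := volume) measurableSet_Ioi).1 hyp
    filter_upwards [this] with l hl hl0
    exact (ae_restrict_iff' (μ := volume) measurableSet_Ioi).1 (hl hl0)
  -- Step 1: for each x, the map l ↦ φ (x+l) - φ l is a.e. constant on large l
  have step1 : ∀ x : ℝ, ∀ᵐ l : ℝ, ∀ᵐ m : ℝ,
      (0 < l → 0 < x + l → 0 < m → 0 < x + m →
        φ (x + l) - φ l = φ (x + m) - φ m) := by
    intro x
    have hshift : ∀ᵐ l : ℝ, 0 < x + l → ∀ᵐ m : ℝ, 0 < m → φ (x + l + m) = φ (x + l) + φ m :=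
      ae_shift x h0
    filter_upwards [h0, hshift] with l hl hxl
    by_cases hl0 : 0 < l
    · by_cases hxl0 : 0 < x + l
      · have h1 := hxl hxl0
        have h2 : ∀ᵐ m : ℝ, 0 < x + m → φ (l + (x + m)) = φ l + φ (x + m) :=
          ae_shift x (hl hl0)
        filter_upwards [h1, h2] with m hm1 hm2 _ _ hm0 hxm0
        have e1 := hm1 hm0
        have e2 := hm2 hxm0
        have : φ (x + l) + φ m = φ l + φ (x + m) := by
          rw [← e1, ← e2]; ring_nf
        rw [eq_comm, sub_eq_sub_iff_add_eq_add]
        rw [this]; abel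
      · filter_upwards with m _ h; exact absurd h hxl0
    · filter_upwards with m h; exact absurd h hl0
  -- Step 2: extract the constant
  have step2 : ∀ x : ℝ, ∃ c : G, ∀ᵐ m : ℝ,
      (0 < m → 0 < x + m → φ (x + m) - φ m = c) := by
    intro x
    obtain ⟨l, hlb, hl⟩ := exists_gt_of_ae (max 0 (-x)) (step1 x)
    have hl0 : 0 < l := lt_of_le_of_lt (le_max_left _ _) hlb
    have hxl0 : 0 < x + l := by
      have := lt_of_le_of_lt (le_max_right 0 (-x)) hlb; linarith
    refine ⟨φ (x + l) - φ l, ?_⟩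
    filter_upwards [hl] with m hm hm0 hxm0
    exact (hm hl0 hxl0 hm0 hxm0).symm
  choose a ha using step2
  refine ⟨a, ?_, ?_⟩
  · -- additivity
    intro x y
    have h1 := ha (x + y)
    have h2 := ha y
    have h3 : ∀ᵐ l : ℝ, 0 < y + l → 0 < x + (y + l) → φ (x + (y + l)) - φ (y + l) = a x :=
      ae_shift y (ha x)
    obtain ⟨l, hlb, hl1, hl2, hl3⟩ :=
      exists_gt_of_ae (max 0 (max (-y) (-(x + y)))) (h1.and (h2.and h3))
    have hl0 : 0 < l := lt_of_le_of_lt (le_max_left _ _) hlb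
    have hyl : 0 < y + l := by
      have := lt_of_le_of_lt ((le_max_left (-y) _).trans (le_max_right _ _)) hlb; linarith
    have hxyl : 0 < x + y + l := by
      have := lt_of_le_of_lt ((le_max_right (-y) _).trans (le_max_right _ _)) hlb; linarith
    have e1 := hl1 hl0 (by linarith : (0:ℝ) < x + y + l)
    have e2 := hl2 hl0 hyl
    have e3 := hl3 hyl (by rw [← add_assoc]; exact hxyl)
    have e3' : φ (x + y + l) - φ (y + l) = a x := by
      rw [← e3]; ring_nf
    calc a (x + y) = φ (x + y + l) - φ l := e1.symm
      _ = (φ (x + y + l) - φ (y + l)) + (φ (y + l) - φ l) := by abel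
      _ = a x + a y := by rw [e3', e2]
  · -- a.e. equality on (0, ∞)
    rw [ae_restrict_iff' (μ := volume) measurableSet_Ioi]
    filter_upwards [h0] with l hl hl0'
    have hl0 : 0 < l := hl0'
    have h1 := hl hl0
    have h2 : ∀ᵐ m : ℝ, 0 < m → 0 < l + m → φ (l + m) - φ m = a l := ha l
    obtain ⟨m, hm0, hm1, hm2⟩ := exists_gt_of_ae 0 (h1.and h2)
    have e1 := hm1 hm0
    have e2 := hm2 hm0 (by linarith)
    rw [e1] at e2
    have : φ l + φ m - φ m = φ l := by abel
    rw [this] at e2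
    exact e2
end
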